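/- arXiv:2306.08417 — 2 statements merged into one kernel-verified Lean document; each statement's English description precedes it below -/
import Mathlib

section
/- For any finite list of n tasks with nonnegative arrival times and execution times, the completion time (makespan) of processing tasks in nondecreasing order of arrival times (FCFS) is less than or equal to the completion time of processing the tasks in any other permutation, where for an ordered sequence of tasks the completion time is defined recursively by C_0 = 0 and C_j = max(C_{j-1}, arrival of j-th task) + execution time of j-th task. -/
/-- Completion time of processing tasks in the given order, starting from time `C`. -/
def comp (a e : ℕ → ℝ) : ℝ → List ℕ → ℝ
  | C, [] => C
  | C, i :: l => comp a e (max C (a i) + e i) l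

/-- Makespan of a queue of tasks (indices). -/
def makespan (a e : ℕ → ℝ) (l : List ℕ) : ℝ := comp a e 0 l

/-! Exchange argument. Completion time is monotone in the starting time, and of two adjacent
tasks `i`, `j` with `a i ≤ a j`, running `i` first finishes no later (as `0 ≤ e i`). Given the FCFS order `l`
and any permutation `x :: t'` of it, moving `x` to the front of `l` passes only tasks arriving
no later than `x`, so by adjacent swaps it does not decrease the completion time; after running
`x`, the rest of `l` is still sorted and a permutation of `t'`, and induction applies. -/

variable (a e : ℕ → ℝ)

theorem comp_mono {C C' : ℝ} (h : C ≤ C') (l : List ℕ) : comp a e C l ≤ comp a e C' l := by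
  induction l generalizing C C' with
  | nil => exact h
  | cons i l ih => exact ih (by gcongr)

theorem comp_cons_cons_le_swap {i j : ℕ} (hij : a i ≤ a j) (hi : 0 ≤ e i) (C : ℝ)
    (l : List ℕ) : comp a e C (i :: j :: l) ≤ comp a e C (j :: i :: l) := by
  refine comp_mono a e ?_ l
  simp only [max_def]
  split_ifs <;> linarith

theorem comp_append_cons_le_cons_append (he : ∀ i, 0 ≤ e i) {x : ℕ} {u : List ℕ}
    (hu : ∀ y ∈ u, a y ≤ a x) (C : ℝ) (v : List ℕ) :
    comp a e C (u ++ x :: v) ≤ comp a e C (x :: (u ++ v)) := by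
  induction u generalizing C with
  | nil => exact le_rfl
  | cons y u ih =>
    calc comp a e C (y :: u ++ x :: v)
        ≤ comp a e C (y :: x :: (u ++ v)) :=
          ih (fun z hz => hu z (List.mem_cons_of_mem y hz)) _
      _ ≤ comp a e C (x :: y :: (u ++ v)) :=
          comp_cons_cons_le_swap a e (hu y List.mem_cons_self) (he y) C _

theorem comp_le_of_perm_of_pairwise (he : ∀ i, 0 ≤ e i) {l l' : List ℕ} (hperm : l.Perm l')
    (hsorted : l.Pairwise (fun i j => a i ≤ a j)) (C : ℝ) :
    comp a e C l ≤ comp a e C l' := by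
  induction l' generalizing l C with
  | nil => rw [List.perm_nil.mp hperm]
  | cons x t' ih =>
    obtain ⟨u, v, rfl⟩ := List.append_of_mem (hperm.mem_iff.mpr List.mem_cons_self)
    have hux : ∀ y ∈ u, a y ≤ a x := fun y hy =>
      (List.pairwise_append.mp hsorted).2.2 y hy x List.mem_cons_self
    have hperm' : (u ++ v).Perm t' := (List.perm_middle.symm.trans hperm).cons_inv
    have hsorted' : (u ++ v).Pairwise (fun i j => a i ≤ a j) :=
      hsorted.sublist ((List.sublist_cons_self x v).append_left u)
    calc comp a e C (u ++ x :: v)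
        ≤ comp a e C (x :: (u ++ v)) := comp_append_cons_le_cons_append a e he hux C v
      _ ≤ comp a e C (x :: t') := ih hperm' hsorted' _

theorem fcfs_optimal_general (a e : ℕ → ℝ) (he : ∀ i, 0 ≤ e i)
    (l l' : List ℕ) (hperm : l.Perm l')
    (hsorted : l.Pairwise (fun i j => a i ≤ a j)) :
    makespan a e l ≤ makespan a e l' :=
  comp_le_of_perm_of_pairwise a e he hperm hsorted 0

/-- processing tasks in nondecreasing order of arrival times (FCFS) gives
a makespan at most that of any other permutation of the tasks. -/
theorem fcfs_optimal (a e : ℕ → ℝ) (ha : ∀ i, 0 ≤ a i) (he : ∀ i, 0 ≤ e i)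
    (l l' : List ℕ) (hperm : l.Perm l')
    (hsorted : l.Pairwise (fun i j => a i ≤ a j)) :
    makespan a e l ≤ makespan a e l' :=
  fcfs_optimal_general a e he l l' hperm hsorted
end

section
/- For any ordering σ of n tasks, the makespan satisfies C_n ≥ a_{σ(j)} + Σ_{k=j}^{n} e_{σ(k)} for every j, and FCFS achieves equality in at least one such lower bound term, i.e., the FCFS makespan equals max_j (a_j + Σ_{k≥j} e_k) when arrivals are sorted nondecreasingly. -/
/-!
Task `σ(j)` cannot start before its arrival `a_{σ(j)}`, and from then on the server needs at least
the total execution time of the remaining tasks; this is the lower bound. Under FCFS,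
`C_{m+1} = max (C_m, a_m) + e_m`, and distributing `+ e_m` over the maximum gives the closed form
by induction on `m`; the base case `C_1 = max (0, a_0) + e_0 = a_0 + e_0` needs `a_0 ≥ 0`.
-/

theorem Fin.sum_filter_le_get_eq_sum_map_drop {α M : Type*} [AddCommMonoid M] (f : α → M) :
    ∀ (l : List α) (j : Fin l.length),
      ∑ k ∈ Finset.univ.filter (fun k : Fin l.length => j ≤ k), f (l.get k) =
        ((l.drop j).map f).sum
  | [], j => j.elim0
  | i :: t, j => by
    refine Fin.cases ?_ (fun j => ?_) j
    · simpa using Fin.sum_univ_fun_getElem (i :: t) f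
    · have ih := Fin.sum_filter_le_get_eq_sum_map_drop f t j
      rw [Finset.sum_filter] at ih ⊢
      refine (Fin.sum_univ_succ (n := t.length) _).trans ?_
      simpa using ih

section Comp

variable (a e : ℕ → ℝ)

theorem comp_append (l l' : List ℕ) (C : ℝ) :
    comp a e C (l ++ l') = comp a e (comp a e C l) l' := by
  induction l generalizing C with
  | nil => rfl
  | cons i t ih => exact ih _

theorem add_sum_le_comp (l : List ℕ) (C : ℝ) : C + (l.map e).sum ≤ comp a e C l := by
  induction l generalizing C with
  | nil => simp [comp]
  | cons i t ih =>
    calc C + ((i :: t).map e).sum = (C + e i) + (t.map e).sum := by simp [add_assoc]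
      _ ≤ (max C (a i) + e i) + (t.map e).sum := by gcongr; exact le_max_left _ _
      _ ≤ comp a e C (i :: t) := ih _

theorem add_sum_le_comp_cons (i : ℕ) (t : List ℕ) (C : ℝ) :
    a i + ((i :: t).map e).sum ≤ comp a e C (i :: t) :=
  calc a i + ((i :: t).map e).sum = (a i + e i) + (t.map e).sum := by simp [add_assoc]
    _ ≤ (max C (a i) + e i) + (t.map e).sum := by gcongr; exact le_max_right _ _
    _ ≤ comp a e C (i :: t) := add_sum_le_comp a e t _

theorem add_sum_drop_le_comp (l : List ℕ) (C : ℝ) (j : Fin l.length) :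
    a (l.get j) + ((l.drop j).map e).sum ≤ comp a e C l :=
  calc a (l.get j) + ((l.drop j).map e).sum ≤ comp a e (comp a e C (l.take j)) (l.drop j) := by
        rw [List.drop_eq_getElem_cons j.isLt]
        exact add_sum_le_comp_cons a e _ _ _
    _ = comp a e C l := by rw [← comp_append, List.take_append_drop]

theorem makespan_range_succ (m : ℕ) :
    makespan a e (List.range (m + 1)) = max (makespan a e (List.range m)) (a m) + e m := by
  rw [makespan, List.range_succ, comp_append]
  rfl

theorem makespan_range_eq_sup' (ha : ∀ i, 0 ≤ a i) :
    ∀ (n : ℕ) (hn : (Finset.range n).Nonempty),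
      makespan a e (List.range n) =
        (Finset.range n).sup' hn (fun j => a j + ∑ k ∈ Finset.Ico j n, e k)
  | 0, hn => absurd hn (by simp)
  | 1, _ => by simp [makespan, comp, ha 0]
  | m + 2, _ => by
    have hm : (Finset.range (m + 1)).Nonempty := Finset.nonempty_range_add_one
    have hsum : ∀ j ∈ Finset.range (m + 1),
        a j + ∑ k ∈ Finset.Ico j (m + 2), e k =
          (a j + ∑ k ∈ Finset.Ico j (m + 1), e k) + e (m + 1) := fun j hj => by
      rw [Finset.sum_Ico_succ_top (Nat.le_succ_of_le (Finset.mem_range_succ_iff.mp hj)), add_assoc]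
    rw [makespan_range_succ, makespan_range_eq_sup' ha (m + 1) hm]
    simp only [Finset.range_add_one (n := m + 1)]
    rw [Finset.sup'_insert hm, Finset.sup'_congr hm rfl hsum, ← Finset.sup'_add, max_comm,
      ← max_add_add_right, Nat.Ico_succ_singleton, Finset.sum_singleton]

end Comp

theorem makespan_lower_and_fcfs_eq_general (n : ℕ) (hn : 0 < n) (a e : ℕ → ℝ)
    (ha : ∀ i, 0 ≤ a i) :
    (∀ l : List ℕ, ∀ j : Fin l.length,
      a (l.get j) +
        ∑ k ∈ Finset.univ.filter (fun k : Fin l.length => j ≤ k), e (l.get k) ≤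
      makespan a e l) ∧
    makespan a e (List.range n) =
      (Finset.range n).sup' (Finset.nonempty_range_iff.mpr hn.ne')
        (fun j => a j + ∑ k ∈ Finset.Ico j n, e k) := by
  refine ⟨fun l j => ?_, makespan_range_eq_sup' a e ha n _⟩
  rw [Fin.sum_filter_le_get_eq_sum_map_drop]
  exact add_sum_drop_le_comp a e l 0 j

/-- for any ordering, the makespan is bounded below by
`a_{σ(j)} + Σ_{k ≥ j} e_{σ(k)}` for every position `j`; and when arrivals are sorted
nondecreasingly the FCFS makespan equals `max_j (a j + Σ_{k ≥ j} e k)`. -/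
theorem makespan_lower_and_fcfs_eq (n : ℕ) (hn : 0 < n) (a e : ℕ → ℝ)
    (ha : ∀ i, 0 ≤ a i) (he : ∀ i, 0 ≤ e i) (hsorted : Monotone a) :
    (∀ l : List ℕ, ∀ j : Fin l.length,
      a (l.get j) +
        ∑ k ∈ Finset.univ.filter (fun k : Fin l.length => j ≤ k), e (l.get k) ≤
      makespan a e l) ∧
    makespan a e (List.range n) =
      (Finset.range n).sup' (Finset.nonempty_range_iff.mpr hn.ne')
        (fun j => a j + ∑ k ∈ Finset.Ico j n, e k) :=
  makespan_lower_and_fcfs_eq_general n hn a e ha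
end
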